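/- Let Σ_4 be the rank-5 lattice with basis A, E1, E2, E3, E4 and Gram matrix [[0,1,0,0,0],[1,-2,0,0,0],[0,0,-2,0,0],[0,0,0,-2,0],[0,0,0,0,-2]]. Then the map σ sending B ↦ 2A + E1, C1 ↦ -A + E2, C2 ↦ -A + E3, C3 ↦ -A + E4 defines a primitive embedding of the rank-4 lattice Λ with Gram matrix [[2,-1,-1,-1],[-1,-2,0,0],[-1,0,-2,0],[-1,0,0,-2]] (in the basis B, C1, C2, C3) into Σ_4. -/

import Mathlib

/-- The bilinear form of the rank-5 lattice `Σ₄` with Gram matrix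
`[[0,1],[1,-2]] ⊕ ⟨-2⟩³` in the basis `A, E1, E2, E3, E4`. -/
def form5 (u v : Fin 5 → ℤ) : ℤ :=
  u 0 * v 1 + u 1 * v 0 - 2 * (u 1 * v 1 + u 2 * v 2 + u 3 * v 3 + u 4 * v 4)

/-- The Gram matrix of Nikulin's rank-4 lattice in the basis `B, C1, C2, C3`. -/
def gram16 : Matrix (Fin 4) (Fin 4) ℤ :=
  !![2, -1, -1, -1; -1, -2, 0, 0; -1, 0, -2, 0; -1, 0, 0, -2]

/-- The map `B ↦ 2A + E1`, `C1 ↦ -A + E2`, `C2 ↦ -A + E3`, `C3 ↦ -A + E4`. -/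
def sigma16 (x : Fin 4 → ℤ) : Fin 5 → ℤ :=
  x 0 • ![2, 1, 0, 0, 0] + x 1 • ![-1, 0, 1, 0, 0] +
    x 2 • ![-1, 0, 0, 1, 0] + x 3 • ![-1, 0, 0, 0, 1]

/-! The coordinates of `σ x` in the basis `A, E1, ..., E4` are `(2x₀ - x₁ - x₂ - x₃, x₀, x₁, x₂, x₃)`,
so `σ` is inverse to forgetting the `A`-coordinate, and its image is the kernel of the linear form
`a - 2e₁ + e₂ + e₃ + e₄`. The kernel of a `ℤ`-valued linear form is saturated, which is
primitivity. -/

lemma sigma16_apply (x : Fin 4 → ℤ) :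
    sigma16 x = ![2 * x 0 - x 1 - x 2 - x 3, x 0, x 1, x 2, x 3] := by
  funext i
  fin_cases i <;> simp [sigma16]
  ring

lemma form5_sigma16 (x y : Fin 4 → ℤ) :
    form5 (sigma16 x) (sigma16 y) = dotProduct x (gram16.mulVec y) := by
  simp only [form5, sigma16_apply, gram16, Matrix.mulVec, dotProduct, Fin.sum_univ_four,
    Matrix.of_apply, Matrix.cons_val', Matrix.cons_val, Matrix.cons_val_fin_one]
  ring

lemma tail_sigma16 (x : Fin 4 → ℤ) : Fin.tail (sigma16 x) = x := by
  funext i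
  fin_cases i <;> simp [sigma16_apply, Fin.tail]

lemma injective_sigma16 : Function.Injective sigma16 :=
  Function.LeftInverse.injective tail_sigma16

lemma mem_range_sigma16_iff (y : Fin 5 → ℤ) :
    y ∈ Set.range sigma16 ↔ y 0 = 2 * y 1 - y 2 - y 3 - y 4 := by
  constructor
  · rintro ⟨x, rfl⟩
    simp [sigma16_apply]
  · intro h
    refine ⟨Fin.tail y, ?_⟩
    funext i
    fin_cases i <;> simp [sigma16_apply, Fin.tail, h]

lemma mem_range_sigma16_of_smul_mem {y : Fin 5 → ℤ} {n : ℤ} (hn : n ≠ 0)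
    (h : n • y ∈ Set.range sigma16) : y ∈ Set.range sigma16 := by
  rw [mem_range_sigma16_iff] at h ⊢
  simp only [Pi.smul_apply, smul_eq_mul] at h
  exact mul_left_cancel₀ hn (by rw [h]; ring)

theorem stmt_16 :
    (∀ x y : Fin 4 → ℤ,
      form5 (sigma16 x) (sigma16 y) = dotProduct x (gram16.mulVec y)) ∧
    Function.Injective sigma16 ∧
    (∀ (y : Fin 5 → ℤ) (n : ℤ), n ≠ 0 →
      n • y ∈ Set.range sigma16 → y ∈ Set.range sigma16) := by
  exact ⟨form5_sigma16, injective_sigma16, fun y n hn => mem_range_sigma16_of_smul_mem hn⟩
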